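/- arXiv:1107.5134 — 6 statements merged into one kernel-verified Lean document; each statement's English description precedes it below -/
import Mathlib

section
/- The function σ ↦ ζ(2σ)/ζ(σ) is strictly monotone increasing on the interval (1, ∞), and its range on this interval is the open interval (0, 1). -/
/-!
For real `σ > 1` the Euler products give `ζ(σ) = ζ(2σ) · S(σ)` with
`S(σ) = ∏_p (1 + p^{-σ}) = ∑_{n squarefree} n^{-σ}`, so the ratio is `1 / S(σ)`, and `S` is
strictly decreasing by termwise comparison. The ratio tends to `0` as `σ → 1⁺`, since `ζ` has a
pole at `1` while `ζ(2σ) → ζ(2)`, and to `1` as `σ → ∞`, since `ζ(σ) → 1`; continuity and the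
intermediate value theorem then give the range.
-/

open Complex Set Filter Topology

theorem StrictMonoOn.image_Ioi_eq_Ioo_of_tendsto {α δ : Type*} [ConditionallyCompleteLinearOrder α]
    [TopologicalSpace α] [OrderTopology α] [DenselyOrdered α] [NoMaxOrder α] [LinearOrder δ]
    [TopologicalSpace δ] [OrderClosedTopology δ] {f : α → δ} {a : α} {l u : δ}
    (hmono : StrictMonoOn f (Ioi a)) (hcont : ContinuousOn f (Ioi a))
    (hl : Tendsto f (𝓝[>] a) (𝓝 l)) (hu : Tendsto f atTop (𝓝 u)) :
    f '' Ioi a = Ioo l u := by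
  refine Subset.antisymm ?_ ?_
  · rintro _ ⟨x, hx, rfl⟩
    obtain ⟨y, hay, hyx⟩ := exists_between hx
    obtain ⟨z, hxz⟩ := exists_gt x
    have hly : l ≤ f y := le_of_tendsto hl <| mem_of_superset (Ioo_mem_nhdsGT hay)
      fun w hw => (hmono hw.1 hay hw.2).le
    have hzu : f z ≤ u := ge_of_tendsto hu <| mem_of_superset (Ici_mem_atTop z)
      fun w hw => hmono.monotoneOn (hx.trans hxz) (hx.trans (hxz.trans_le hw)) hw
    exact ⟨hly.trans_lt (hmono hay hx hyx), (hmono hx (hx.trans hxz) hxz).trans_le hzu⟩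
  · exact isPreconnected_Ioi.intermediate_value_Ioo (le_principal_iff.mpr self_mem_nhdsWithin)
      (le_principal_iff.mpr (Ioi_mem_atTop a)) hcont hl hu

noncomputable def squarefreeSummand (σ : ℝ) : ℕ → ℝ :=
  {n | Squarefree n}.indicator fun n => (n : ℝ) ^ (-σ)

noncomputable def squarefreeZeta (σ : ℝ) : ℝ := ∑' n, squarefreeSummand σ n

lemma squarefreeSummand_nonneg (σ : ℝ) (n : ℕ) : 0 ≤ squarefreeSummand σ n :=
  indicator_nonneg (fun _ _ => by positivity) n

lemma summable_squarefreeSummand {σ : ℝ} (hσ : 1 < σ) : Summable (squarefreeSummand σ) :=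
  (Real.summable_nat_rpow.mpr (neg_lt_neg hσ)).indicator _

lemma squarefreeSummand_mul (σ : ℝ) {m n : ℕ} (h : m.Coprime n) :
    squarefreeSummand σ (m * n) = squarefreeSummand σ m * squarefreeSummand σ n := by
  by_cases hm : Squarefree m <;> by_cases hn : Squarefree n <;>
    simp [squarefreeSummand, Nat.squarefree_mul h, hm, hn,
      Real.mul_rpow (Nat.cast_nonneg m) (Nat.cast_nonneg n)]

lemma tsum_squarefreeSummand_prime_pow (σ : ℝ) {p : ℕ} (hp : p.Prime) :
    ∑' e, squarefreeSummand σ (p ^ e) = 1 + (p : ℝ) ^ (-σ) := by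
  have hvanish : ∀ e ∉ ({0, 1} : Finset ℕ), squarefreeSummand σ (p ^ e) = 0 := by
    intro e he
    simp only [Finset.mem_insert, Finset.mem_singleton, not_or] at he
    simp [squarefreeSummand, Nat.squarefree_pow_iff hp.ne_one he.1, he.2]
  rw [tsum_eq_sum hvanish, Finset.sum_pair zero_ne_one]
  simp [squarefreeSummand, hp.squarefree]

lemma hasProd_squarefreeZeta {σ : ℝ} (hσ : 1 < σ) :
    HasProd (fun p : Nat.Primes => 1 + (p : ℝ) ^ (-σ)) (squarefreeZeta σ) := by
  have hsum : Summable (‖squarefreeSummand σ ·‖) := by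
    simpa only [Real.norm_of_nonneg (squarefreeSummand_nonneg σ _)]
      using summable_squarefreeSummand hσ
  refine (EulerProduct.eulerProduct_hasProd (by simp [squarefreeSummand])
    (squarefreeSummand_mul σ) hsum (by simp [squarefreeSummand])).congr_fun fun p => ?_
  exact (tsum_squarefreeSummand_prime_pow σ p.prop).symm

lemma one_le_squarefreeZeta {σ : ℝ} (hσ : 1 < σ) : 1 ≤ squarefreeZeta σ := by
  simpa [squarefreeZeta, squarefreeSummand] using
    (summable_squarefreeSummand hσ).le_tsum 1 fun n _ => squarefreeSummand_nonneg σ n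

lemma strictAntiOn_squarefreeZeta : StrictAntiOn squarefreeZeta (Ioi 1) := by
  intro a ha b hb hab
  refine (summable_squarefreeSummand hb).tsum_lt_tsum (i := 2) (fun n => ?_) ?_
    (summable_squarefreeSummand ha)
  · refine indicator_le_indicator' fun hn => ?_
    have hn1 : (1 : ℝ) ≤ n := Nat.one_le_cast.mpr (Nat.pos_of_ne_zero (Squarefree.ne_zero hn))
    exact Real.rpow_le_rpow_of_exponent_le hn1 (neg_le_neg hab.le)
  · simpa [squarefreeSummand, Nat.squarefree_two] using
      Real.rpow_lt_rpow_of_exponent_lt one_lt_two (neg_lt_neg hab)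

lemma hasProd_riemannZeta_ofReal {σ : ℝ} (hσ : 1 < σ) :
    HasProd (fun p : Nat.Primes => (((1 - (p : ℝ) ^ (-σ))⁻¹ : ℝ) : ℂ)) (riemannZeta σ) := by
  convert riemannZeta_eulerProduct_hasProd (s := σ) (by simpa using hσ) using 2 with p
  push_cast [ofReal_cpow (Nat.cast_nonneg _)]
  rfl

lemma riemannZeta_eq_riemannZeta_two_mul_mul_squarefreeZeta {σ : ℝ} (hσ : 1 < σ) :
    riemannZeta σ = riemannZeta (2 * σ) * squarefreeZeta σ := by
  have hS := (hasProd_squarefreeZeta hσ).map Complex.ofRealHom continuous_ofReal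
  have h2 := hasProd_riemannZeta_ofReal (by linarith : 1 < 2 * σ)
  rw [ofReal_mul, ofReal_ofNat] at h2
  refine (hasProd_riemannZeta_ofReal hσ).unique ((h2.mul hS).congr_fun fun p => ?_)
  set x := (p : ℝ) ^ (-σ)
  have hx : 0 < x := Real.rpow_pos_of_pos (Nat.cast_pos.mpr p.prop.pos) _
  have hsq : (p : ℝ) ^ (-(2 * σ)) = x ^ 2 := by
    rw [← Real.rpow_natCast, ← Real.rpow_mul (Nat.cast_nonneg _)]
    ring_nf
  have hfactor : (1 - x)⁻¹ = (1 - x ^ 2)⁻¹ * (1 + x) := by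
    rw [show 1 - x ^ 2 = (1 - x) * (1 + x) by ring, mul_inv, mul_assoc,
      inv_mul_cancel₀ (by linarith), mul_one]
  simp only [Function.comp_apply, ofRealHom_eq_coe, hsq, hfactor, ofReal_mul]
  rfl

lemma riemannZeta_two_mul_div_riemannZeta {σ : ℝ} (hσ : 1 < σ) :
    riemannZeta (2 * σ) / riemannZeta σ = ((squarefreeZeta σ)⁻¹ : ℝ) := by
  have hζ : riemannZeta (2 * σ) ≠ 0 := riemannZeta_ne_zero_of_one_lt_re (by simp; linarith)
  rw [riemannZeta_eq_riemannZeta_two_mul_mul_squarefreeZeta hσ, div_mul_cancel_left₀ hζ,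
    ofReal_inv]

lemma tendsto_riemannZeta_atTop : Tendsto (fun x : ℝ => riemannZeta x) atTop (𝓝 1) := by
  have habs : LSeries.abscissaOfAbsConv 1 < ⊤ := by
    rw [LSeries.abscissaOfAbsConv_one]
    exact EReal.coe_lt_top 1
  refine (LSeries.tendsto_atTop habs).congr' ?_
  filter_upwards [eventually_gt_atTop 1] with x hx
  exact LSeries_one_eq_riemannZeta (by simpa using hx)

lemma tendsto_riemannZeta_two_mul_div_riemannZeta_atTop :
    Tendsto (fun x : ℝ => riemannZeta (2 * x) / riemannZeta x) atTop (𝓝 1) := by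
  have h2 : Tendsto (fun x : ℝ => riemannZeta (2 * x)) atTop (𝓝 1) := by
    simpa [Function.comp_def] using
      tendsto_riemannZeta_atTop.comp (tendsto_id.const_mul_atTop two_pos)
  have hlim := h2.div tendsto_riemannZeta_atTop one_ne_zero
  rwa [div_one] at hlim

lemma tendsto_riemannZeta_two_mul_div_riemannZeta_nhdsNE_one :
    Tendsto (fun s => riemannZeta (2 * s) / riemannZeta s) (𝓝[≠] 1) (𝓝 0) := by
  have hζ2 : ContinuousAt (fun s => riemannZeta (2 * s)) 1 :=
    (differentiableAt_riemannZeta (by norm_num)).continuousAt.comp (by fun_prop)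
  have hnum : Tendsto (fun s => riemannZeta (2 * s) * (s - 1)) (𝓝[≠] 1) (𝓝 0) := by
    simpa using ((hζ2.tendsto.mul ((continuous_sub_right 1).tendsto 1)).mono_left
      nhdsWithin_le_nhds)
  have hlim := hnum.div riemannZeta_residue_one one_ne_zero
  rw [zero_div] at hlim
  refine hlim.congr' ?_
  filter_upwards [self_mem_nhdsWithin] with s hs
  rw [Pi.div_apply, mul_comm (s - 1), mul_div_mul_right _ _ (sub_ne_zero.mpr hs)]

lemma differentiableOn_riemannZeta_two_mul_div_riemannZeta :
    DifferentiableOn ℂ (fun s => riemannZeta (2 * s) / riemannZeta s) {s | 1 < s.re} := by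
  intro s (hs : 1 < s.re)
  have hs1 : s ≠ 1 := by rintro rfl; simp at hs
  have h2s : 2 * s ≠ 1 := fun h => by simpa [h] using (by simp; linarith : 1 < (2 * s).re)
  exact (((differentiableAt_riemannZeta h2s).comp s (by fun_prop)).div
    (differentiableAt_riemannZeta hs1)
    (riemannZeta_ne_zero_of_one_lt_re hs)).differentiableWithinAt

/-- `σ ↦ ζ(2σ)/ζ(σ)` is strictly increasing on `(1, ∞)` and its range there is `(0, 1)`. -/
theorem zeta_ratio_strictMonoOn_and_range :
    StrictMonoOn (fun σ : ℝ => (riemannZeta (2 * σ) / riemannZeta σ).re) (Ioi 1) ∧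
      (fun σ : ℝ => (riemannZeta (2 * σ) / riemannZeta σ).re) '' (Ioi 1) = Ioo 0 1 := by
  set f := fun σ : ℝ => (riemannZeta (2 * σ) / riemannZeta σ).re
  have hf : ∀ σ ∈ Ioi (1 : ℝ), f σ = (squarefreeZeta σ)⁻¹ := fun σ hσ => by
    simp only [f, riemannZeta_two_mul_div_riemannZeta hσ, ofReal_re]
  have hmono : StrictMonoOn f (Ioi 1) := fun a ha b hb hab => by
    rw [hf a ha, hf b hb, inv_lt_inv₀ (by linarith [one_le_squarefreeZeta ha])
      (by linarith [one_le_squarefreeZeta hb])]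
    exact strictAntiOn_squarefreeZeta ha hb hab
  have hcont : ContinuousOn f (Ioi 1) :=
    continuous_re.comp_continuousOn <|
      differentiableOn_riemannZeta_two_mul_div_riemannZeta.continuousOn.comp
        continuous_ofReal.continuousOn fun σ hσ => by simpa using hσ
  have hcoe : Tendsto ofReal (𝓝[>] 1) (𝓝[≠] 1) :=
    continuous_ofReal.continuousWithinAt.tendsto_nhdsWithin
      fun σ (hσ : 1 < σ) => by simpa using hσ.ne'
  have hl : Tendsto f (𝓝[>] 1) (𝓝 0) :=
    (continuous_re.tendsto 0).comp
      (tendsto_riemannZeta_two_mul_div_riemannZeta_nhdsNE_one.comp hcoe)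
  have hu : Tendsto f atTop (𝓝 1) :=
    (continuous_re.tendsto 1).comp tendsto_riemannZeta_two_mul_div_riemannZeta_atTop
  exact ⟨hmono, hmono.image_Ioi_eq_Ioo_of_tendsto hcont hl hu⟩
end

section
/- If s = σ + it is a complex number with σ > 1 and ζ(s) = 1, then σ ≤ σ₁, where σ₁ is the unique real number greater than 1 satisfying ζ(σ₁) = (2^{σ₁} + 1)/(2^{σ₁} - 1). -/
open Complex

/-!
Removing the even terms from the Dirichlet series gives, for `Re s > 1`,
`(2^s - 1) ζ(s) = 2^s + ∑_{k ≥ 0} 2^s / (2k+3)^s`. If `ζ(s) = 1` the series equals `-1`, so by the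
triangle inequality `F(σ) = ∑_{k ≥ 0} (2/(2k+3))^σ` is at least `1` at `σ = Re s`, whereas the
defining equation of `σ₁` says exactly `F(σ₁) = 1`. Every term of `F` decreases in `σ`, the first
one strictly, hence `Re s ≤ σ₁`.
-/

noncomputable def oddRatioSum (σ : ℝ) : ℝ := ∑' k : ℕ, (2 / (2 * k + 3 : ℝ)) ^ σ

noncomputable def oddRatioSeries (s : ℂ) : ℂ := ∑' k : ℕ, 2 ^ s / ((2 * k + 3 : ℕ) : ℂ) ^ s

lemma summable_two_div_odd_rpow {σ : ℝ} (hσ : 1 < σ) :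
    Summable fun k : ℕ => (2 / (2 * k + 3 : ℝ)) ^ σ := by
  have hodd : Summable fun k : ℕ => 1 / ((2 * k + 3 : ℕ) : ℝ) ^ σ :=
    (Real.summable_one_div_nat_rpow.mpr hσ).comp_injective fun _ _ h => by simpa using h
  refine (hodd.mul_left (2 ^ σ)).congr fun k => ?_
  rw [Real.div_rpow zero_le_two (by positivity)]
  push_cast
  ring

lemma oddRatioSum_strictAntiOn : StrictAntiOn oddRatioSum (Set.Ioi 1) := by
  intro σ hσ τ hτ hστ
  refine Summable.tsum_lt_tsum (i := 0) (fun k => ?_) ?_ (summable_two_div_odd_rpow hτ)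
    (summable_two_div_odd_rpow hσ)
  · exact Real.rpow_le_rpow_of_exponent_ge (by positivity)
      ((div_le_one (by positivity)).mpr (by linarith [k.cast_nonneg (α := ℝ)])) hστ.le
  · exact Real.rpow_lt_rpow_of_exponent_gt (by norm_num) (by norm_num) hστ

lemma norm_two_cpow_div_odd_cpow (s : ℂ) (k : ℕ) :
    ‖(2 : ℂ) ^ s / ((2 * k + 3 : ℕ) : ℂ) ^ s‖ = (2 / (2 * k + 3 : ℝ)) ^ s.re := by
  rw [norm_div, ← Nat.cast_ofNat, norm_natCast_cpow_of_pos two_pos,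
    norm_natCast_cpow_of_pos (by omega), Real.div_rpow zero_le_two (by positivity)]
  push_cast
  rfl

lemma norm_oddRatioSeries_le {s : ℂ} (hs : 1 < s.re) : ‖oddRatioSeries s‖ ≤ oddRatioSum s.re := by
  simp only [oddRatioSeries, oddRatioSum, ← norm_two_cpow_div_odd_cpow]
  exact norm_tsum_le_tsum_norm <| (summable_two_div_odd_rpow hs).congr fun k =>
    (norm_two_cpow_div_odd_cpow s k).symm

lemma oddRatioSeries_ofReal (σ : ℝ) : oddRatioSeries σ = oddRatioSum σ := by
  rw [oddRatioSeries, oddRatioSum, ofReal_tsum]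
  refine tsum_congr fun k => ?_
  rw [Real.div_rpow zero_le_two (by positivity), ofReal_div, ofReal_cpow zero_le_two,
    ofReal_cpow (by positivity)]
  push_cast
  rfl

lemma riemannZeta_eq_div_two_cpow_add {s : ℂ} (hs : 1 < s.re) :
    riemannZeta s = riemannZeta s / 2 ^ s + (1 + ∑' k : ℕ, 1 / ((2 * k + 3 : ℕ) : ℂ) ^ s) := by
  have hsum := summable_one_div_nat_cpow.mpr hs
  have heven_sum : Summable fun k : ℕ => 1 / ((2 * k : ℕ) : ℂ) ^ s :=
    hsum.comp_injective fun _ _ h => by simpa using h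
  have hodd_sum : Summable fun k : ℕ => 1 / ((2 * k + 1 : ℕ) : ℂ) ^ s :=
    hsum.comp_injective fun _ _ h => by simpa using h
  have heven : ∑' k : ℕ, 1 / ((2 * k : ℕ) : ℂ) ^ s = riemannZeta s / 2 ^ s := by
    rw [zeta_eq_tsum_one_div_nat_cpow hs, ← tsum_div_const]
    exact tsum_congr fun k => by
      rw [Nat.cast_mul, natCast_mul_natCast_cpow, Nat.cast_ofNat]; ring
  have hodd : ∑' k : ℕ, 1 / ((2 * k + 1 : ℕ) : ℂ) ^ s =
      1 + ∑' k : ℕ, 1 / ((2 * k + 3 : ℕ) : ℂ) ^ s := by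
    rw [hodd_sum.tsum_eq_zero_add]
    congr 1
    simp
  rw [← heven, ← hodd, zeta_eq_tsum_one_div_nat_cpow hs]
  exact (tsum_even_add_odd (f := fun n : ℕ => 1 / (n : ℂ) ^ s) heven_sum hodd_sum).symm

lemma two_cpow_sub_one_mul_riemannZeta {s : ℂ} (hs : 1 < s.re) :
    (2 ^ s - 1) * riemannZeta s = 2 ^ s + oddRatioSeries s := by
  have hseries : oddRatioSeries s = 2 ^ s * ∑' k : ℕ, 1 / ((2 * k + 3 : ℕ) : ℂ) ^ s := by
    rw [oddRatioSeries, ← tsum_mul_left]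
    simp only [mul_one_div]
  have hz := riemannZeta_eq_div_two_cpow_add hs
  field_simp at hz
  rw [hseries]
  linear_combination hz

lemma one_le_oddRatioSum_of_riemannZeta_eq_one {s : ℂ} (hs : 1 < s.re) (hz : riemannZeta s = 1) :
    1 ≤ oddRatioSum s.re := by
  have h : oddRatioSeries s = -1 := by
    have hid := two_cpow_sub_one_mul_riemannZeta hs
    rw [hz, mul_one] at hid
    linear_combination -hid
  simpa [h] using norm_oddRatioSeries_le hs

lemma oddRatioSum_eq_one_of_riemannZeta_eq {σ : ℝ} (hσ : 1 < σ)
    (hval : riemannZeta σ = (((2 : ℝ) ^ σ + 1) / ((2 : ℝ) ^ σ - 1) : ℝ)) :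
    oddRatioSum σ = 1 := by
  have h := two_cpow_sub_one_mul_riemannZeta (s := σ) (by simpa using hσ)
  rw [hval, oddRatioSeries_ofReal, ← ofReal_ofNat, ← ofReal_cpow zero_le_two] at h
  have h1 : (1 : ℝ) < 2 ^ σ := Real.one_lt_rpow one_lt_two (by linarith)
  have h' : (2 ^ σ - 1) * ((2 ^ σ + 1) / (2 ^ σ - 1)) = 2 ^ σ + oddRatioSum σ := by
    exact_mod_cast h
  rw [mul_div_cancel₀ _ (by linarith)] at h'
  linarith

theorem zeta_eq_one_re_le_general (σ₁ : ℝ) (hσ₁ : 1 < σ₁)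
    (hval : riemannZeta σ₁ = (((2 : ℝ) ^ σ₁ + 1) / ((2 : ℝ) ^ σ₁ - 1) : ℝ))
    (s : ℂ) (hs : 1 < s.re) (hz : riemannZeta s = 1) : s.re ≤ σ₁ := by
  by_contra! hlt
  have := oddRatioSum_strictAntiOn (Set.mem_Ioi.mpr hσ₁) (Set.mem_Ioi.mpr hs) hlt
  linarith [one_le_oddRatioSum_of_riemannZeta_eq_one hs hz,
    oddRatioSum_eq_one_of_riemannZeta_eq hσ₁ hval]

/-- If `Re s > 1` and `ζ(s) = 1`, then `Re s ≤ σ₁`, where `σ₁ > 1` is the unique real with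
`ζ(σ₁) = (2^{σ₁}+1)/(2^{σ₁}-1)`. -/
theorem zeta_eq_one_re_le (σ₁ : ℝ) (hσ₁ : 1 < σ₁)
    (hval : riemannZeta σ₁ = (((2 : ℝ) ^ σ₁ + 1) / ((2 : ℝ) ^ σ₁ - 1) : ℝ))
    (huniq : ∀ σ : ℝ, 1 < σ →
      riemannZeta σ = (((2 : ℝ) ^ σ + 1) / ((2 : ℝ) ^ σ - 1) : ℝ) → σ = σ₁)
    (s : ℂ) (hs : 1 < s.re) (hz : riemannZeta s = 1) : s.re ≤ σ₁ :=
  zeta_eq_one_re_le_general σ₁ hσ₁ hval s hs hz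
end

section
/- If s = σ + it is a complex number with σ > 1 and ζ'(s) = 0, then log 2 / (2^σ + 1) ≤ ∑_{p ≥ 3} (log p)/(p^σ - 1), where the sum runs over odd primes p. -/
open Complex

/-!
For `re s > 1` the von Mangoldt series `L Λ s = -ζ'(s)/ζ(s)` regroups, summing the geometric series
over the powers of each prime, into `∑_p log p / (p^s - 1)`. If `ζ'(s) = 0` this sum vanishes, so
the term of `p = 2` is minus the sum over the odd primes; taking absolute values and using
`|2^s - 1| ≤ 2^σ + 1` and `|p^s - 1| ≥ p^σ - 1` gives the inequality.
-/

open scoped LSeries.notation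

open ArithmeticFunction LSeries

section

variable {n : ℕ} {s : ℂ}

lemma rpow_re_sub_one_le_norm_natCast_cpow_sub_one (hn : 0 < n) :
    (n : ℝ) ^ s.re - 1 ≤ ‖(n : ℂ) ^ s - 1‖ := by
  simpa [norm_natCast_cpow_of_pos hn] using norm_sub_norm_le ((n : ℂ) ^ s) 1

lemma norm_natCast_cpow_sub_one_le (hn : 0 < n) :
    ‖(n : ℂ) ^ s - 1‖ ≤ (n : ℝ) ^ s.re + 1 := by
  simpa [norm_natCast_cpow_of_pos hn] using norm_sub_le ((n : ℂ) ^ s) 1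

lemma one_lt_natCast_rpow (hn : 1 < n) (hs : 0 < s.re) : 1 < (n : ℝ) ^ s.re :=
  Real.one_lt_rpow (by exact_mod_cast hn) hs

lemma norm_log_div_natCast_cpow_sub_one_le (hn : 1 < n) (hs : 0 < s.re) :
    ‖(Real.log n : ℂ) / ((n : ℂ) ^ s - 1)‖ ≤ Real.log n / ((n : ℝ) ^ s.re - 1) := by
  have hlog : 0 ≤ Real.log n := Real.log_natCast_nonneg n
  rw [norm_div, norm_real, Real.norm_of_nonneg hlog]
  exact div_le_div_of_nonneg_left hlog (by linarith [one_lt_natCast_rpow hn hs])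
    (rpow_re_sub_one_le_norm_natCast_cpow_sub_one (by omega))

lemma log_div_rpow_add_one_le_norm (hn : 1 < n) (hs : 0 < s.re) :
    Real.log n / ((n : ℝ) ^ s.re + 1) ≤ ‖(Real.log n : ℂ) / ((n : ℂ) ^ s - 1)‖ := by
  have hlog : 0 ≤ Real.log n := Real.log_natCast_nonneg n
  rw [norm_div, norm_real, Real.norm_of_nonneg hlog]
  exact div_le_div_of_nonneg_left hlog
    ((by linarith [one_lt_natCast_rpow hn hs] : (0 : ℝ) < _).trans_le
      (rpow_re_sub_one_le_norm_natCast_cpow_sub_one (by omega)))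
    (norm_natCast_cpow_sub_one_le (by omega))

end

lemma hasSum_term_vonMangoldt_prime_pow (p : Nat.Primes) {s : ℂ} (hs : 0 < s.re) :
    HasSum (fun k ↦ term ↗Λ s ((p : ℕ) ^ (k + 1)))
      ((Real.log (p : ℕ) : ℂ) / (((p : ℕ) : ℂ) ^ s - 1)) := by
  have hps : 1 < ‖((p : ℕ) : ℂ) ^ s‖ := by
    rw [norm_natCast_cpow_of_pos p.prop.pos]
    exact one_lt_natCast_rpow p.prop.one_lt hs
  have hps0 : ((p : ℕ) : ℂ) ^ s ≠ 0 := norm_pos_iff.mp (one_pos.trans hps)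
  have hx : ‖(((p : ℕ) : ℂ) ^ s)⁻¹‖ < 1 := by
    rw [norm_inv]; exact inv_lt_one_of_one_lt₀ hps
  have hsum : (Real.log (p : ℕ) : ℂ) / (((p : ℕ) : ℂ) ^ s - 1) =
      (Real.log (p : ℕ) : ℂ) * (((p : ℕ) : ℂ) ^ s)⁻¹ * (1 - (((p : ℕ) : ℂ) ^ s)⁻¹)⁻¹ := by
    field_simp
  rw [hsum]
  refine ((hasSum_geometric_of_norm_lt_one hx).mul_left _).congr_fun fun k ↦ ?_
  rw [term_of_ne_zero (pow_ne_zero _ p.prop.ne_zero), vonMangoldt_apply_pow k.succ_ne_zero,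
    vonMangoldt_apply_prime p.prop, Nat.cast_pow, ← natCast_cpow_natCast_mul, cpow_nat_mul,
    div_eq_mul_inv, ← inv_pow]
  ring

lemma hasSum_primes_log_div_cpow_sub_one {s : ℂ} (hs : 1 < s.re) :
    HasSum (fun p : Nat.Primes ↦ (Real.log (p : ℕ) : ℂ) / (((p : ℕ) : ℂ) ^ s - 1)) (L ↗Λ s) := by
  have hΛ := LSeriesSummable_vonMangoldt hs
  have hsupp : Function.support (term ↗Λ s) ⊆ {n | IsPrimePow n} := fun n hn ↦
    vonMangoldt_ne_zero_iff.mp fun h ↦ hn (by simp [term, h])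
  have hprod : Summable fun pk : Nat.Primes × ℕ ↦ term ↗Λ s ((pk.1 : ℕ) ^ (pk.2 + 1)) :=
    hΛ.comp_injective (Subtype.val_injective.comp Nat.Primes.prodNatEquiv.injective)
  have hfiber p := hasSum_term_vonMangoldt_prime_pow p (s := s) (by linarith)
  rw [LSeries, tsum_eq_tsum_primes_of_support_subset_prime_powers hΛ hsupp,
    tsum_congr fun p ↦ (hfiber p).tsum_eq]
  exact (hprod.hasSum.prod_fiberwise hfiber).summable.hasSum

lemma summable_log_div_rpow_sub_one_primes {σ : ℝ} (hσ : 1 < σ) :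
    Summable fun p : Nat.Primes ↦ Real.log (p : ℕ) / (((p : ℕ) : ℝ) ^ σ - 1) := by
  rw [← Complex.summable_ofReal]
  convert (hasSum_primes_log_div_cpow_sub_one (s := σ) (by simpa)).summable with p
  push_cast [ofReal_cpow (Nat.cast_nonneg _)]
  rfl

-- `⟨2, Nat.prime_two⟩` alone elaborates at type `{p // p.Prime}`, which `rw` does not match
-- against `Nat.Primes`.
def Nat.Primes.two : Nat.Primes := ⟨2, Nat.prime_two⟩

lemma Nat.Primes.tsum_eq_add_tsum_three_le {E : Type*} [NormedAddCommGroup E] [CompleteSpace E]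
    {f : Nat.Primes → E} (hf : Summable f) :
    ∑' p, f p = f Nat.Primes.two + ∑' p : {p : Nat.Primes // 3 ≤ (p : ℕ)}, f p := by
  have hcompl : {p : Nat.Primes | 3 ≤ (p : ℕ)}ᶜ = {Nat.Primes.two} := by
    ext p
    simp only [Set.mem_compl_iff, Set.mem_ofPred_eq, not_le]
    constructor
    · intro h
      exact Nat.Primes.coe_nat_injective (show (p : ℕ) = 2 by linarith [p.prop.two_le])
    · rintro rfl
      decide
  have hsplit := hf.tsum_subtype_add_tsum_subtype_compl {p : Nat.Primes | 3 ≤ (p : ℕ)}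
  rw [hcompl, tsum_singleton] at hsplit
  rw [← hsplit, add_comm]
  rfl

/-- If `Re s > 1` and `ζ'(s) = 0`, then `log 2/(2^σ+1) ≤ ∑_{p odd prime} (log p)/(p^σ-1)`
where `σ = Re s`. -/
theorem zeta_deriv_zero_ineq (s : ℂ) (hs : 1 < s.re) (hz : deriv riemannZeta s = 0) :
    Real.log 2 / ((2 : ℝ) ^ s.re + 1) ≤
      ∑' p : {p : Nat.Primes // 3 ≤ (p : ℕ)},
        Real.log (p : ℕ) / (((p : ℕ) : ℝ) ^ s.re - 1) := by
  have hs₀ : 0 < s.re := by linarith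
  set f : Nat.Primes → ℂ := fun p ↦ (Real.log (p : ℕ) : ℂ) / (((p : ℕ) : ℂ) ^ s - 1)
  have hf : HasSum f 0 := by
    have := hasSum_primes_log_div_cpow_sub_one hs
    rwa [LSeries_vonMangoldt_eq_deriv_riemannZeta_div hs, hz, neg_zero, zero_div] at this
  have hf₂ : f Nat.Primes.two = -∑' p : {p : Nat.Primes // 3 ≤ (p : ℕ)}, f p := by
    rw [eq_neg_iff_add_eq_zero, ← Nat.Primes.tsum_eq_add_tsum_three_le hf.summable, hf.tsum_eq]
  calc Real.log 2 / ((2 : ℝ) ^ s.re + 1)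
      ≤ ‖f Nat.Primes.two‖ := by exact_mod_cast log_div_rpow_add_one_le_norm one_lt_two hs₀
    _ = ‖∑' p : {p : Nat.Primes // 3 ≤ (p : ℕ)}, f p‖ := by rw [hf₂, norm_neg]
    _ ≤ _ := tsum_of_norm_bounded ((summable_log_div_rpow_sub_one_primes hs).subtype _).hasSum
        fun p ↦ norm_log_div_natCast_cpow_sub_one_le p.1.prop.one_lt hs₀
end

section
/- If s = σ + it satisfies σ > 1 and ζ'(s) = 0, then σ ≤ E, where E > 1 is the unique real solution of (2^{σ+1}/(4^σ - 1)) log 2 = -ζ'(σ)/ζ(σ). -/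
open Complex

/-!
Split `-ζ'/ζ(s) = ∑ Λ(n) n^{-s}` into the geometric series `log 2 / (2^s - 1)` over the powers
of two and the tail `T(σ) = ∑ Λ(n) n^{-σ}` over the remaining `n`, all of which are `≥ 3`.
The equation defining `E` says exactly that `T(E) = log 2 / (2^E + 1)`. If `ζ'(s) = 0`, the
two parts cancel, so `log 2 / (2^σ + 1) ≤ |log 2 / (2^s - 1)| ≤ T(σ)`. Since `n ≥ 3`, the
function `2^σ T(σ)` is nonincreasing, whereas `2^σ log 2 / (2^σ + 1)` is increasing; hence
`σ ≤ E`.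
-/

namespace ZetaDerivZero

open ArithmeticFunction LSeries.notation

def powersOfTwo : Set ℕ := Set.range fun k : ℕ => 2 ^ (k + 1)

lemma three_le_of_vonMangoldt_ne_zero {n : ℕ} (hn : n ∉ powersOfTwo) (h : Λ n ≠ 0) :
    3 ≤ n := by
  have h2 : 2 ≤ n := (vonMangoldt_ne_zero_iff.mp h).two_le
  rcases h2.eq_or_lt with rfl | h3
  · exact absurd ⟨0, rfl⟩ hn
  · exact h3

lemma term_vonMangoldt_ofReal (x : ℝ) (n : ℕ) :
    LSeries.term ↗Λ x n = ((Λ n / (n : ℝ) ^ x : ℝ) : ℂ) := by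
  rcases eq_or_ne n 0 with rfl | hn
  · simp
  · rw [LSeries.term_of_ne_zero hn, ofReal_div, ofReal_cpow n.cast_nonneg, ofReal_natCast]

lemma norm_term_vonMangoldt (s : ℂ) (n : ℕ) :
    ‖LSeries.term ↗Λ s n‖ = Λ n / (n : ℝ) ^ s.re := by
  rcases eq_or_ne n 0 with rfl | hn
  · simp
  · rw [LSeries.norm_term_eq, if_neg hn, norm_real, Real.norm_of_nonneg vonMangoldt_nonneg]

lemma summable_vonMangoldt_div_rpow {x : ℝ} (hx : 1 < x) :
    Summable fun n : ℕ => Λ n / (n : ℝ) ^ x := by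
  refine summable_ofReal.mp ((LSeriesSummable_vonMangoldt (s := x) ?_).congr fun n => ?_)
  · simpa using hx
  · exact term_vonMangoldt_ofReal x n

lemma norm_two_cpow (s : ℂ) : ‖(2 : ℂ) ^ s‖ = (2 : ℝ) ^ s.re := by
  rw [← ofReal_ofNat, norm_cpow_eq_rpow_re_of_pos two_pos]

lemma one_lt_norm_two_cpow {s : ℂ} (hs : 0 < s.re) : 1 < ‖(2 : ℂ) ^ s‖ :=
  norm_two_cpow s ▸ Real.one_lt_rpow one_lt_two hs

lemma two_cpow_sub_one_ne_zero {s : ℂ} (hs : 0 < s.re) : (2 : ℂ) ^ s - 1 ≠ 0 :=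
  sub_ne_zero.mpr fun h => by simpa [h] using one_lt_norm_two_cpow hs

lemma tsum_term_vonMangoldt_powersOfTwo {s : ℂ} (hs : 0 < s.re) :
    ∑' n : powersOfTwo, LSeries.term ↗Λ s n = Real.log 2 / (2 ^ s - 1) := by
  have hq : 1 < ‖(2 : ℂ) ^ s‖ := one_lt_norm_two_cpow hs
  have hq1 : (2 : ℂ) ^ s - 1 ≠ 0 := two_cpow_sub_one_ne_zero hs
  have hterm (k : ℕ) : LSeries.term ↗Λ s (2 ^ (k + 1)) =
      Real.log 2 * ((2 : ℂ) ^ s)⁻¹ * ((2 : ℂ) ^ s)⁻¹ ^ k := by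
    rw [LSeries.term_of_ne_zero (by positivity), vonMangoldt_apply_pow k.succ_ne_zero,
      vonMangoldt_apply_prime Nat.prime_two, Nat.cast_pow, ← natCast_cpow_natCast_mul,
      cpow_nat_mul]
    push_cast
    ring
  have hinj : Function.Injective fun k : ℕ => 2 ^ (k + 1) :=
    fun a b h => Nat.succ_injective (Nat.pow_right_injective le_rfl h)
  rw [powersOfTwo, tsum_range _ hinj]
  simp only [hterm]
  have hratio : ‖((2 : ℂ) ^ s)⁻¹‖ < 1 := by rw [norm_inv]; exact inv_lt_one_of_one_lt₀ hq
  rw [tsum_mul_left, tsum_geometric_of_norm_lt_one hratio]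
  field_simp

lemma LSeries_vonMangoldt_eq_add_tsum_compl {s : ℂ} (hs : 1 < s.re) :
    L ↗Λ s = Real.log 2 / (2 ^ s - 1) + ∑' n : ↥powersOfTwoᶜ, LSeries.term ↗Λ s n := by
  have hsum : Summable (LSeries.term ↗Λ s) := LSeriesSummable_vonMangoldt hs
  rw [← tsum_term_vonMangoldt_powersOfTwo (one_pos.trans hs),
    (hsum.subtype _).tsum_add_tsum_compl (hsum.subtype _)]
  rfl

noncomputable def tail (x : ℝ) : ℝ := ∑' n : ↥powersOfTwoᶜ, Λ n / (n : ℝ) ^ x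

lemma neg_logDeriv_riemannZeta_ofReal {x : ℝ} (hx : 1 < x) :
    -(deriv riemannZeta x / riemannZeta x) =
      ((Real.log 2 / ((2 : ℝ) ^ x - 1) + tail x : ℝ) : ℂ) := by
  have hx' : 1 < (x : ℂ).re := by simpa using hx
  rw [← neg_div, ← LSeries_vonMangoldt_eq_deriv_riemannZeta_div hx',
    LSeries_vonMangoldt_eq_add_tsum_compl hx', tail, ofReal_add, ofReal_tsum,
    ofReal_div, ofReal_sub, ofReal_cpow zero_le_two, ofReal_ofNat, ofReal_one]
  simp only [term_vonMangoldt_ofReal]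

lemma log_two_div_le_tail {s : ℂ} (hs : 1 < s.re) (hz : deriv riemannZeta s = 0) :
    Real.log 2 / ((2 : ℝ) ^ s.re + 1) ≤ tail s.re := by
  have hlog : 0 < Real.log 2 := Real.log_pos one_lt_two
  have hcancel :
      Real.log 2 / ((2 : ℂ) ^ s - 1) = -∑' n : ↥powersOfTwoᶜ, LSeries.term ↗Λ s n := by
    have h := LSeries_vonMangoldt_eq_add_tsum_compl hs
    rw [LSeries_vonMangoldt_eq_deriv_riemannZeta_div hs, hz, neg_zero, zero_div] at h
    linear_combination -h
  have hden : ‖(2 : ℂ) ^ s - 1‖ ≤ (2 : ℝ) ^ s.re + 1 := by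
    calc ‖(2 : ℂ) ^ s - 1‖ ≤ ‖(2 : ℂ) ^ s‖ + ‖(1 : ℂ)‖ := norm_sub_le _ _
      _ = (2 : ℝ) ^ s.re + 1 := by
        rw [norm_two_cpow, norm_one]
  have hnorms : Summable fun n : ℕ => ‖LSeries.term ↗Λ s n‖ := by
    simpa only [norm_term_vonMangoldt] using summable_vonMangoldt_div_rpow hs
  calc Real.log 2 / ((2 : ℝ) ^ s.re + 1)
      ≤ Real.log 2 / ‖(2 : ℂ) ^ s - 1‖ :=
        div_le_div_of_nonneg_left hlog.le
          (norm_pos_iff.mpr (two_cpow_sub_one_ne_zero (one_pos.trans hs))) hden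
    _ = ‖(Real.log 2 : ℂ) / ((2 : ℂ) ^ s - 1)‖ := by
        rw [norm_div, norm_real, Real.norm_of_nonneg hlog.le]
    _ = ‖∑' n : ↥powersOfTwoᶜ, LSeries.term ↗Λ s n‖ := by rw [hcancel, norm_neg]
    _ ≤ ∑' n : ↥powersOfTwoᶜ, ‖LSeries.term ↗Λ s n‖ :=
        norm_tsum_le_tsum_norm (hnorms.subtype _)
    _ = tail s.re := tsum_congr fun n => norm_term_vonMangoldt s n

lemma antitoneOn_two_rpow_mul_tail :
    AntitoneOn (fun x => (2 : ℝ) ^ x * tail x) (Set.Ioi 1) := by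
  intro x hx y hy hxy
  simp only [tail, ← tsum_mul_left]
  refine Summable.tsum_le_tsum (fun n => ?_)
    (((summable_vonMangoldt_div_rpow hy).subtype _).mul_left _)
    (((summable_vonMangoldt_div_rpow hx).subtype _).mul_left _)
  rcases eq_or_ne (Λ n) 0 with h0 | h0
  · simp [h0]
  have hn : (2 : ℝ) < n := by exact_mod_cast three_le_of_vonMangoldt_ne_zero n.2 h0
  have hn0 : (0 : ℝ) < n := two_pos.trans hn
  have hratio : ((2 : ℝ) / n) ^ y ≤ (2 / n) ^ x :=
    Real.rpow_le_rpow_of_exponent_ge (by positivity) ((div_le_one hn0).mpr hn.le) hxy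
  rw [Real.div_rpow zero_le_two hn0.le, Real.div_rpow zero_le_two hn0.le] at hratio
  calc (2 : ℝ) ^ y * (Λ n / (n : ℝ) ^ y) = Λ n * ((2 : ℝ) ^ y / (n : ℝ) ^ y) := by ring
    _ ≤ Λ n * ((2 : ℝ) ^ x / (n : ℝ) ^ x) :=
        mul_le_mul_of_nonneg_left hratio vonMangoldt_nonneg
    _ = (2 : ℝ) ^ x * (Λ n / (n : ℝ) ^ x) := by ring

lemma two_rpow_add_one_div_four_rpow_sub_one {x : ℝ} (hx : x ≠ 0) :
    (2 : ℝ) ^ (x + 1) / ((4 : ℝ) ^ x - 1) =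
      1 / ((2 : ℝ) ^ x - 1) + 1 / ((2 : ℝ) ^ x + 1) := by
  have hne : (2 : ℝ) ^ x - 1 ≠ 0 := sub_ne_zero.mpr fun h =>
    hx ((Real.rpow_right_inj two_pos (by norm_num)).mp (h.trans (Real.rpow_zero 2).symm))
  have hfour : (4 : ℝ) ^ x - 1 = ((2 : ℝ) ^ x - 1) * ((2 : ℝ) ^ x + 1) := by
    rw [show (4 : ℝ) = 2 * 2 by norm_num, Real.mul_rpow zero_le_two zero_le_two]
    ring
  rw [hfour, Real.rpow_add_one two_ne_zero]
  field_simp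
  ring

lemma tail_eq_log_two_div_of_eq {E : ℝ} (hE : 1 < E)
    (hEeq : ((((2 : ℝ) ^ (E + 1) / ((4 : ℝ) ^ E - 1)) * Real.log 2 : ℝ) : ℂ) =
      -(deriv riemannZeta E / riemannZeta E)) :
    tail E = Real.log 2 / ((2 : ℝ) ^ E + 1) := by
  have h := ofReal_injective (hEeq.trans (neg_logDeriv_riemannZeta_ofReal hE))
  rw [two_rpow_add_one_div_four_rpow_sub_one (by positivity)] at h
  linear_combination -h

end ZetaDerivZero

open ZetaDerivZero

theorem zeta_deriv_zero_re_le_general (E : ℝ) (hE : 1 < E)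
    (hEeq : ((((2 : ℝ) ^ (E + 1) / ((4 : ℝ) ^ E - 1)) * Real.log 2 : ℝ) : ℂ) =
      -(deriv riemannZeta E / riemannZeta E))
    (s : ℂ) (hs : 1 < s.re) (hz : deriv riemannZeta s = 0) : s.re ≤ E := by
  by_contra! hlt
  have hlog : 0 < Real.log 2 := Real.log_pos one_lt_two
  have hpow : (2 : ℝ) ^ E < 2 ^ s.re := Real.rpow_lt_rpow_of_exponent_lt one_lt_two hlt
  have hlower : (2 : ℝ) ^ s.re * (Real.log 2 / (2 ^ s.re + 1)) ≤ 2 ^ s.re * tail s.re :=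
    mul_le_mul_of_nonneg_left (log_two_div_le_tail hs hz) (by positivity)
  have hdecr : (2 : ℝ) ^ s.re * tail s.re ≤ 2 ^ E * (Real.log 2 / (2 ^ E + 1)) :=
    tail_eq_log_two_div_of_eq hE hEeq ▸ antitoneOn_two_rpow_mul_tail hE hs hlt.le
  have hincr : (2 : ℝ) ^ E * (Real.log 2 / (2 ^ E + 1)) <
      2 ^ s.re * (Real.log 2 / (2 ^ s.re + 1)) := by
    rw [mul_div_assoc', mul_div_assoc', div_lt_div_iff₀ (by positivity) (by positivity)]
    nlinarith
  linarith

/-- If `Re s > 1` and `ζ'(s) = 0`, then `Re s ≤ E`, where `E > 1` is the unique solution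
of `(2^{σ+1}/(4^σ-1)) log 2 = -ζ'(σ)/ζ(σ)`. -/
theorem zeta_deriv_zero_re_le (E : ℝ) (hE : 1 < E)
    (hEeq : ((((2 : ℝ) ^ (E + 1) / ((4 : ℝ) ^ E - 1)) * Real.log 2 : ℝ) : ℂ) =
      -(deriv riemannZeta E / riemannZeta E))
    (huniq : ∀ σ : ℝ, 1 < σ →
      ((((2 : ℝ) ^ (σ + 1) / ((4 : ℝ) ^ σ - 1)) * Real.log 2 : ℝ) : ℂ) =
        -(deriv riemannZeta σ / riemannZeta σ) → σ = E)
    (s : ℂ) (hs : 1 < s.re) (hz : deriv riemannZeta s = 0) : s.re ≤ E :=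
  zeta_deriv_zero_re_le_general E hE hEeq s hs hz
end

section
/- For all real x with 0 < x < 1 and all real φ, arctan²( x·sin φ / (1 - x·cos φ) ) + ( x(x - cos φ) / (1 + x² - 2x·cos φ) )² ≥ ( x/(1+x) )². -/
lemma arctan_sq_ge (u : ℝ) : u ^ 2 / (1 + u ^ 2) ≤ Real.arctan u ^ 2 := by
  have h1 : (0:ℝ) < 1 + u ^ 2 := by positivity
  have hs : Real.sin (Real.arctan u) = u / Real.sqrt (1 + u ^ 2) := Real.sin_arctan u
  have h2 : Real.sin (Real.arctan u) ^ 2 ≤ Real.arctan u ^ 2 := Real.sin_sq_le_sq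
  have h3 : Real.sin (Real.arctan u) ^ 2 = u ^ 2 / (1 + u ^ 2) := by
    rw [hs, div_pow, Real.sq_sqrt h1.le]
  linarith

/-- For `0 < x < 1` and all real `φ`,
`arctan²(x sin φ/(1 - x cos φ)) + (x(x-cos φ)/(1+x²-2x cos φ))² ≥ (x/(1+x))²`. -/
theorem arctan_sq_add_sq_ge (x φ : ℝ) (hx0 : 0 < x) (hx1 : x < 1) :
    (Real.arctan (x * Real.sin φ / (1 - x * Real.cos φ))) ^ 2 +
      (x * (x - Real.cos φ) / (1 + x ^ 2 - 2 * x * Real.cos φ)) ^ 2 ≥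
    (x / (1 + x)) ^ 2 := by
  set s := Real.sin φ with hsdef
  set c := Real.cos φ with hcdef
  have hsc : s ^ 2 + c ^ 2 = 1 := Real.sin_sq_add_cos_sq φ
  have hc1 : -1 ≤ c := Real.neg_one_le_cos φ
  have hc2 : c ≤ 1 := Real.cos_le_one φ
  have h1xc : 0 < 1 - x * c := by nlinarith
  have hD : 0 < 1 + x ^ 2 - 2 * x * c := by nlinarith [sq_nonneg (1 - x)]
  set D := 1 + x ^ 2 - 2 * x * c with hDdef
  set u := x * s / (1 - x * c) with hudef
  -- Step B : u²/(1+u²) = x²(1-c²)/D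
  have hB : u ^ 2 / (1 + u ^ 2) = x ^ 2 * (1 - c ^ 2) / D := by
    have hu2 : 1 + u ^ 2 = D / (1 - x * c) ^ 2 := by
      rw [hudef, div_pow, hDdef]
      field_simp
      nlinarith [hsc]
    rw [hu2, hudef, div_pow, div_div_div_cancel_right₀ (pow_ne_zero 2 h1xc.ne')]
    congr 1
    nlinarith [hsc]
  have hA : x ^ 2 * (1 - c ^ 2) / D ≤ Real.arctan u ^ 2 := hB ▸ arctan_sq_ge u
  -- key polynomial fact
  have hQ : 0 ≤ 2 * (1 + x) ^ 2 * c ^ 2 - (2 + 9 * x + 4 * x ^ 2 + x ^ 3) * c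
      + (2 + x + 4 * x ^ 2 + x ^ 3) := by
    have hT : (0:ℝ) ≤ 12 + 28 * x + 11 * x ^ 2 - 2 * x ^ 3 - x ^ 4 := by
      nlinarith [pow_le_one₀ hx0.le hx1.le (n := 3), pow_le_one₀ hx0.le hx1.le (n := 4),
        pow_nonneg hx0.le 2, hx0.le]
    nlinarith [sq_nonneg (4 * (1 + x) ^ 2 * c - (2 + 9 * x + 4 * x ^ 2 + x ^ 3)),
      mul_nonneg (sq_nonneg (1 - x)) hT]
  have hfinal : (x / (1 + x)) ^ 2 ≤ x ^ 2 * (1 - c ^ 2) / D + (x * (x - c) / D) ^ 2 := by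
    rw [← sub_nonneg]
    have hid : x ^ 2 * (1 - c ^ 2) / D + (x * (x - c) / D) ^ 2 - (x / (1 + x)) ^ 2 =
        x ^ 3 * (1 + c) * (2 * (1 + x) ^ 2 * c ^ 2 - (2 + 9 * x + 4 * x ^ 2 + x ^ 3) * c
          + (2 + x + 4 * x ^ 2 + x ^ 3)) / (D ^ 2 * (1 + x) ^ 2) := by
      field_simp
      ring
    rw [hid]
    apply div_nonneg _ (by positivity)
    exact mul_nonneg (mul_nonneg (by positivity) (by linarith)) hQ
  calc (x / (1 + x)) ^ 2
      ≤ x ^ 2 * (1 - c ^ 2) / D + (x * (x - c) / D) ^ 2 := hfinal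
    _ ≤ Real.arctan u ^ 2 + (x * (x - c) / D) ^ 2 := by linarith
end

section
/- Suppose (tₙ) is a sequence of real numbers such that 2^{-i tₙ} → -1 and p^{-i tₙ} → 1 for every odd prime p. Then for every real a > 1, ζ(s + i tₙ) → ((2^s - 1)/(2^s + 1)) ζ(s) uniformly on the closed half-plane Re(s) ≥ a. -/
/-!
Write `χ(n) = (-1)^{ν₂(n)}`. Since `n ↦ n^{-i tₖ}` is completely multiplicative, the hypotheses
on primes give `n^{-i tₖ} → χ(n)` for every `n ≥ 1`, and `ζ(s + i tₖ) = ∑ n^{-i tₖ} n^{-s}`.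
On `Re s ≥ a` all these terms are dominated by `n^{-a}`, so a uniform version of Tannery's
theorem gives uniform convergence to `∑ χ(n) n^{-s}`. Splitting into even and odd `n`
identifies this limit with `((2^s - 1)/(2^s + 1)) ζ(s)`.
-/

open Complex Filter Topology LSeries

theorem tendstoUniformlyOn_tsum_of_dominated_convergence {ι α β E : Type*}
    [NormedAddCommGroup E] [CompleteSpace E] {l : Filter ι} {S : Set α}
    {F : ι → α → β → E} {G : α → β → E} {u : β → ℝ} (hu : Summable u)
    (hlim : ∀ n, TendstoUniformlyOn (fun k x => F k x n) (fun x => G x n) l S)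
    (hF : ∀ k, ∀ x ∈ S, ∀ n, ‖F k x n‖ ≤ u n) (hG : ∀ x ∈ S, ∀ n, ‖G x n‖ ≤ u n) :
    TendstoUniformlyOn (fun k x => ∑' n, F k x n) (fun x => ∑' n, G x n) l S := by
  -- Uniform convergence on `S` is convergence along `l ×ˢ 𝓟 S`, where Tannery's theorem applies.
  simp only [tendstoUniformlyOn_iff_tendsto, uniformity_eq_comap_nhds_zero E, tendsto_comap_iff,
    Function.comp_def] at hlim ⊢
  have hS : ∀ᶠ q in l ×ˢ 𝓟 S, q.2 ∈ S :=
    eventually_prod_principal_iff.2 (Eventually.of_forall fun _ _ => id)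
  have hsub : ∀ᶠ q in l ×ˢ 𝓟 S,
      ∑' n, (F q.1 q.2 n - G q.2 n) = ∑' n, F q.1 q.2 n - ∑' n, G q.2 n :=
    hS.mono fun q hq =>
      (hu.of_norm_bounded (hF _ _ hq)).tsum_sub (hu.of_norm_bounded (hG _ hq))
  have hbound : ∀ᶠ q in l ×ˢ 𝓟 S, ∀ n, ‖F q.1 q.2 n - G q.2 n‖ ≤ 2 * u n :=
    hS.mono fun q hq n => (norm_sub_le _ _).trans (by linarith [hF q.1 q.2 hq n, hG q.2 hq n])
  simpa using (tendsto_tsum_of_dominated_convergence (hu.mul_left 2) hlim hbound).congr' hsub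

theorem tendsto_natCast_cpow_of_tendsto_prime {ι : Type*} {l : Filter ι} {z : ι → ℂ}
    {χ : ℕ → ℂ} (hχ_one : χ 1 = 1) (hχ_mul : ∀ {m n}, m ≠ 0 → n ≠ 0 → χ (m * n) = χ m * χ n)
    (hprime : ∀ p : ℕ, p.Prime → Tendsto (fun k => (p : ℂ) ^ z k) l (𝓝 (χ p))) {n : ℕ}
    (hn : n ≠ 0) : Tendsto (fun k => (n : ℂ) ^ z k) l (𝓝 (χ n)) := by
  induction n using Nat.recOnMul with
  | zero => exact absurd rfl hn
  | one => simpa [hχ_one] using tendsto_const_nhds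
  | prime p hp => exact hprime p hp
  | mul a b ha hb =>
    obtain ⟨ha0, hb0⟩ := mul_ne_zero_iff.1 hn
    simpa only [Nat.cast_mul, natCast_mul_natCast_cpow, hχ_mul ha0 hb0] using
      (ha ha0).mul (hb hb0)

namespace LSeries

variable {ι : Type*} {l : Filter ι}

theorem tendstoUniformlyOn_term {f : ι → ℕ → ℂ} {g : ℕ → ℂ} (a : ℝ) {n : ℕ}
    (hlim : n ≠ 0 → Tendsto (fun k => f k n) l (𝓝 (g n))) :
    TendstoUniformlyOn (fun k s => term (f k) s n) (fun s => term g s n) l {s | a ≤ s.re} := by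
  have hdiff : Tendsto (fun k => ‖term (g - f k) a n‖) l (𝓝 0) := by
    rcases eq_or_ne n 0 with rfl | hn
    · simpa using tendsto_const_nhds
    · simp only [norm_term_eq, hn, if_false, Pi.sub_apply]
      simpa using ((hlim hn).const_sub (g n)).norm.div_const _
  rw [Metric.tendstoUniformlyOn_iff]
  intro ε hε
  filter_upwards [hdiff.eventually_lt_const hε] with k hk s hs
  rw [dist_eq_norm, ← term_sub_apply]
  exact (norm_term_le_of_re_le_re _ (by simpa using hs) n).trans_lt hk

theorem tendstoUniformlyOn_of_dominated {f : ι → ℕ → ℂ} {g b : ℕ → ℂ} {a : ℝ}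
    (hb : LSeriesSummable b a) (hf : ∀ k, ∀ n ≠ 0, ‖f k n‖ ≤ ‖b n‖)
    (hg : ∀ n ≠ 0, ‖g n‖ ≤ ‖b n‖) (hlim : ∀ n ≠ 0, Tendsto (fun k => f k n) l (𝓝 (g n))) :
    TendstoUniformlyOn (fun k => LSeries (f k)) (LSeries g) l {s | a ≤ s.re} := by
  have hterm {c : ℕ → ℂ} (hc : ∀ n ≠ 0, ‖c n‖ ≤ ‖b n‖) (s : ℂ) (hs : a ≤ s.re) (n : ℕ) :
      ‖term c s n‖ ≤ ‖term b a n‖ := by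
    rcases eq_or_ne n 0 with rfl | hn
    · simp
    · exact (norm_term_le s (hc n hn)).trans (norm_term_le_of_re_le_re b (by simpa using hs) n)
  exact tendstoUniformlyOn_tsum_of_dominated_convergence hb.norm
    (fun n => tendstoUniformlyOn_term a (hlim n)) (fun k => hterm (hf k)) (hterm hg)

end LSeries

theorem LSeries_natCast_cpow_neg (w s : ℂ) :
    LSeries (fun n : ℕ => (n : ℂ) ^ (-w)) s = LSeries 1 (s + w) := by
  refine tsum_congr fun n => ?_
  rcases eq_or_ne n 0 with rfl | hn
  · simp
  · rw [term_of_ne_zero hn, term_of_ne_zero hn, cpow_add _ _ (Nat.cast_ne_zero.2 hn), cpow_neg,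
      Pi.one_apply]
    ring

theorem LSeries_eq_even_add_odd {f : ℕ → ℂ} {s : ℂ} (hf : LSeriesSummable f s) :
    LSeries f s = (2 ^ s)⁻¹ * LSeries (fun n => f (2 * n)) s + ∑' n, term f s (2 * n + 1) := by
  rw [LSeries, ← tsum_even_add_odd (hf.comp_injective (mul_right_injective₀ two_ne_zero))
    (hf.comp_injective ((add_left_injective 1).comp (mul_right_injective₀ two_ne_zero))),
    LSeries, ← tsum_mul_left]
  congr 1
  refine tsum_congr fun n => ?_
  rcases eq_or_ne n 0 with rfl | hn
  · simp
  · have h2n : ((2 * n : ℕ) : ℂ) ^ s = 2 ^ s * n ^ s := by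
      exact_mod_cast natCast_mul_natCast_cpow 2 n s
    rw [term_of_ne_zero (by positivity), term_of_ne_zero hn, h2n]
    ring

theorem two_cpow_add_one_ne_zero {s : ℂ} (hs : 0 < s.re) : (2 : ℂ) ^ s + 1 ≠ 0 := by
  intro h
  have hnorm : ‖(2 : ℂ) ^ s‖ = 1 := by rw [eq_neg_of_add_eq_zero_left h, norm_neg, norm_one]
  have h2 : ‖((2 : ℕ) : ℂ) ^ s‖ = (2 : ℝ) ^ s.re := by
    rw [norm_natCast_cpow_of_pos two_pos, Nat.cast_ofNat]
  rw [Nat.cast_ofNat, hnorm] at h2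
  exact (Real.one_lt_rpow one_lt_two hs).ne h2

def twoAdicSign (n : ℕ) : ℂ := (-1) ^ padicValNat 2 n

theorem twoAdicSign_one : twoAdicSign 1 = 1 := by simp [twoAdicSign]

theorem twoAdicSign_two : twoAdicSign 2 = -1 := by simp [twoAdicSign]

theorem twoAdicSign_of_not_two_dvd {n : ℕ} (hn : ¬2 ∣ n) : twoAdicSign n = 1 := by
  simp [twoAdicSign, padicValNat.eq_zero_of_not_dvd hn]

theorem twoAdicSign_mul {m n : ℕ} (hm : m ≠ 0) (hn : n ≠ 0) :
    twoAdicSign (m * n) = twoAdicSign m * twoAdicSign n := by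
  simp [twoAdicSign, padicValNat.mul hm hn, pow_add]

theorem twoAdicSign_two_mul {n : ℕ} (hn : n ≠ 0) : twoAdicSign (2 * n) = -twoAdicSign n := by
  rw [twoAdicSign_mul two_ne_zero hn, twoAdicSign_two, neg_one_mul]

theorem norm_twoAdicSign (n : ℕ) : ‖twoAdicSign n‖ = 1 := by simp [twoAdicSign]

theorem LSeries_twoAdicSign {s : ℂ} (hs : 1 < s.re) :
    LSeries twoAdicSign s = (2 ^ s - 1) / (2 ^ s + 1) * riemannZeta s := by
  have hone : LSeriesSummable 1 s := LSeriesSummable_one_iff.mpr hs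
  have hsign : LSeriesSummable twoAdicSign s :=
    hone.norm.of_norm_bounded fun n => norm_term_le s (by simp [norm_twoAdicSign])
  -- Both series have the same odd part `O`; their even parts give `ζ = 2⁻ˢ ζ + O` and
  -- `L = -2⁻ˢ L + O`.
  have hζ := LSeries_eq_even_add_odd hone
  rw [show (fun n => (1 : ℕ → ℂ) (2 * n)) = 1 from rfl] at hζ
  have hL := LSeries_eq_even_add_odd hsign
  rw [LSeries_congr (g := -twoAdicSign) twoAdicSign_two_mul, LSeries_neg] at hL
  have hodd : ∑' n, term twoAdicSign s (2 * n + 1) = ∑' n, term 1 s (2 * n + 1) :=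
    tsum_congr fun n => by simp [twoAdicSign_of_not_two_dvd (Nat.not_two_dvd_bit1 n)]
  rw [hodd] at hL
  have hq : (2 : ℂ) ^ s * ((2 : ℂ) ^ s)⁻¹ = 1 := mul_inv_cancel₀ (by simp)
  rw [← LSeries_one_eq_riemannZeta hs, div_mul_eq_mul_div,
    eq_div_iff (two_cpow_add_one_ne_zero (by linarith))]
  linear_combination (2 ^ s) * (hL - hζ) - (LSeries twoAdicSign s + LSeries 1 s) * hq

/-- If `2^{-i tₙ} → -1` and `p^{-i tₙ} → 1` for every odd prime `p`, then for every real
`a > 1`, `ζ(s + i tₙ) → ((2^s-1)/(2^s+1)) ζ(s)` uniformly on `{s : Re s ≥ a}`. -/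
theorem zeta_shift_tendstoUniformlyOn (t : ℕ → ℝ)
    (h2 : Tendsto (fun n => (2 : ℂ) ^ (-(t n : ℂ) * I)) atTop (nhds (-1)))
    (hp : ∀ p : ℕ, p.Prime → p ≠ 2 →
      Tendsto (fun n => (p : ℂ) ^ (-(t n : ℂ) * I)) atTop (nhds 1))
    (a : ℝ) (ha : 1 < a) :
    TendstoUniformlyOn (fun n s => riemannZeta (s + (t n : ℂ) * I))
      (fun s => ((2 : ℂ) ^ s - 1) / ((2 : ℂ) ^ s + 1) * riemannZeta s)
      atTop {s : ℂ | a ≤ s.re} := by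
  have hlim : ∀ n : ℕ, n ≠ 0 →
      Tendsto (fun k => (n : ℂ) ^ (-(t k : ℂ) * I)) atTop (𝓝 (twoAdicSign n)) := by
    refine fun n hn => tendsto_natCast_cpow_of_tendsto_prime twoAdicSign_one twoAdicSign_mul
      (fun p hp' => ?_) hn
    rcases eq_or_ne p 2 with rfl | hp2
    · simpa [twoAdicSign_two] using h2
    · rw [twoAdicSign_of_not_two_dvd (hp'.odd_of_ne_two hp2).not_two_dvd_nat]
      exact hp p hp' hp2
  have hunif := LSeries.tendstoUniformlyOn_of_dominated (b := 1) (a := a)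
    (LSeriesSummable_one_iff.mpr (by simpa using ha))
    (fun k n hn => by simp [norm_natCast_cpow_of_pos (Nat.pos_of_ne_zero hn)])
    (fun n _ => by simp [norm_twoAdicSign]) hlim
  refine (hunif.congr_right fun s hs => LSeries_twoAdicSign (ha.trans_le hs)).congr
    (Eventually.of_forall fun k s hs => ?_)
  have hs' : 1 < (s + (t k : ℂ) * I).re := by simpa using ha.trans_le hs
  simp only [neg_mul, LSeries_natCast_cpow_neg, LSeries_one_eq_riemannZeta hs']
end
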